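/- (Lemma 6.3, structure theorem for three fixed points.) Under the three-vertex hypotheses, there exist an integer m ≥ 1 and vectors b_1, ..., b_{k−1}, g forming a basis of V such that: (i) n = m·2^{k−1}; (ii) β̂ is the multiset in which each sum Σ_{i∈S} b_i over a subset S ⊆ {1,...,k−1} of odd cardinality occurs with multiplicity exactly m (so β̂ consists of 2^{k−2} distinct elements, each occurring m times); (iii) γ̂ is the image multiset of β̂ under the map x ↦ g + b_1 + x; (iv) δ̂ is the image multiset of β̂ under the map x ↦ g + x. -/

import Mathlib

/-- Two multisets of vectors of `V` are *congruent mod `ρ`* if their images under the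
quotient map `V → V ⧸ span {ρ}` are equal as multisets. -/
def CongMod {V : Type*} [AddCommGroup V] [Module (ZMod 2) V] (ρ : V)
    (A B : Multiset V) : Prop :=
  A.map ⇑(Submodule.span (ZMod 2) {ρ}).mkQ = B.map ⇑(Submodule.span (ZMod 2) {ρ}).mkQ

section Aux
open scoped Classical

variable {V : Type*} [AddCommGroup V] [Module (ZMod 2) V]

lemma char2_add_self (y : V) : y + y = 0 := by
  have : ((2 : ZMod 2)) • y = y + y := two_smul _ y
  rw [show (2 : ZMod 2) = 0 by decide, zero_smul] at this
  exact this.symm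

lemma add_cancel_right (x y : V) : x + y + y = x := by
  rw [add_assoc, char2_add_self, add_zero]

lemma odd_nsmul_char2 {t : ℕ} (ht : Odd t) (y : V) : t • y = y := by
  obtain ⟨s, rfl⟩ := ht
  rw [add_nsmul, one_nsmul, mul_comm, mul_nsmul, two_nsmul, char2_add_self]
  simp

lemma even_nsmul_char2 {t : ℕ} (ht : Even t) (y : V) : t • y = 0 := by
  obtain ⟨s, rfl⟩ := ht
  rw [← two_mul, mul_comm, mul_nsmul, two_nsmul, char2_add_self]

lemma mem_coset_iff {E : Submodule (ZMod 2) V} {w : V} (hw : w ∈ E) (x : V) :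
    x + w ∈ E ↔ x ∈ E := by
  constructor
  · intro h
    have := E.add_mem h hw
    rwa [add_cancel_right] at this
  · intro h
    exact E.add_mem h hw

lemma quot_eq_iff {β : V} (x y : V) :
    (Submodule.span (ZMod 2) {β}).mkQ x = (Submodule.span (ZMod 2) {β}).mkQ y ↔
      x = y ∨ x = y + β := by
  have hsub : x - y = x + y := by
    rw [sub_eq_iff_eq_add, add_assoc, char2_add_self, add_zero]
  rw [Submodule.mkQ_apply, Submodule.mkQ_apply, Submodule.Quotient.eq,
    Submodule.mem_span_singleton, hsub]
  constructor
  · rintro ⟨a, ha⟩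
    have hcases : a = 0 ∨ a = 1 := by fin_cases a; exacts [Or.inl rfl, Or.inr rfl]
    rcases hcases with h | h <;> subst h
    · left
      rw [zero_smul] at ha
      have := congrArg (· + y) ha.symm
      simpa [add_assoc, char2_add_self] using this
    · right
      rw [one_smul] at ha
      have h2 : β + y = x := by rw [ha, add_assoc, char2_add_self, add_zero]
      rw [← h2, add_comm]
  · rintro (rfl | rfl)
    · exact ⟨0, by simp [char2_add_self]⟩
    · exact ⟨1, by simp [one_smul]; rw [add_comm y β, add_assoc, char2_add_self, add_zero]⟩

lemma count_pair {β : V} (hβ : β ≠ 0) (M : Multiset V) (v : V) :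
    Multiset.count ((Submodule.span (ZMod 2) {β}).mkQ v)
      (M.map ⇑(Submodule.span (ZMod 2) {β}).mkQ)
    = Multiset.count v M + Multiset.count (v + β) M := by
  classical
  have hne : v ≠ v + β := fun h => hβ ((left_eq_add.mp h))
  rw [Multiset.count_map]
  have h1 : M.filter (fun a => (Submodule.span (ZMod 2) {β}).mkQ v
      = (Submodule.span (ZMod 2) {β}).mkQ a)
      = M.filter (fun a => v = a ∨ v + β = a) := by
    apply Multiset.filter_congr
    intro a _
    rw [quot_eq_iff]
    constructor
    · rintro (rfl | rfl)
      · exact Or.inl rfl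
      · exact Or.inr (by rw [add_assoc, char2_add_self, add_zero])
    · rintro (rfl | rfl)
      · exact Or.inl rfl
      · exact Or.inr (by rw [add_assoc, char2_add_self, add_zero])
  rw [h1]
  have h2 : M.filter (fun a => v = a ∨ v + β = a)
      = M.filter (fun a => v = a) + M.filter (fun a => v + β = a) := by
    rw [Multiset.filter_add_filter]
    have h3 : M.filter (fun a => v = a ∧ v + β = a) = 0 := by
      rw [Multiset.filter_eq_nil]
      rintro a _ ⟨rfl, h⟩
      exact hne h.symm
    rw [h3, add_zero]
  rw [h2, Multiset.card_add, Multiset.count_eq_card_filter_eq,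
    Multiset.count_eq_card_filter_eq]

lemma translate_of_congMod {β : V} (hβ : β ≠ 0) (C D : Multiset V)
    (hdisj : ∀ v, v ∈ C → v ∈ D → False)
    (h : C.map ⇑(Submodule.span (ZMod 2) {β}).mkQ
       = D.map ⇑(Submodule.span (ZMod 2) {β}).mkQ) (v : V) :
    Multiset.count v D = Multiset.count (v + β) C := by
  have key := congrArg (Multiset.count ((Submodule.span (ZMod 2) {β}).mkQ v)) h
  rw [count_pair hβ, count_pair hβ] at key
  have d1 : Multiset.count v C = 0 ∨ Multiset.count v D = 0 := by
    by_contra hc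
    push_neg at hc
    exact hdisj v (Multiset.count_pos.mp (Nat.pos_of_ne_zero hc.1))
      (Multiset.count_pos.mp (Nat.pos_of_ne_zero hc.2))
  have d2 : Multiset.count (v + β) C = 0 ∨ Multiset.count (v + β) D = 0 := by
    by_contra hc
    push_neg at hc
    exact hdisj (v + β) (Multiset.count_pos.mp (Nat.pos_of_ne_zero hc.1))
      (Multiset.count_pos.mp (Nat.pos_of_ne_zero hc.2))
  omega

lemma count_invariant_span {M : Multiset V} {G : Set V}
    (hG : ∀ w ∈ G, ∀ v, Multiset.count (v + w) M = Multiset.count v M) :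
    ∀ w ∈ Submodule.span (ZMod 2) G, ∀ v,
      Multiset.count (v + w) M = Multiset.count v M := by
  intro w hw
  induction hw using Submodule.span_induction with
  | mem x hx => exact hG x hx
  | zero => intro v; rw [add_zero]
  | add x y _ _ hx hy => intro v; rw [← add_assoc, hy, hx]
  | smul a x _ hx =>
    intro v
    have : a = 0 ∨ a = 1 := by fin_cases a; exacts [Or.inl rfl, Or.inr rfl]
    rcases this with rfl | rfl
    · rw [zero_smul, add_zero]
    · rw [one_smul]; exact hx v

lemma finsetSum_eq_indicator {n : ℕ} (b : Fin n → V) (S : Finset (Fin n)) :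
    ∑ i ∈ S, b i = ∑ i, (if i ∈ S then (1 : ZMod 2) else 0) • b i := by
  simp only [ite_smul, one_smul, zero_smul]
  rw [Finset.sum_ite_mem, Finset.univ_inter]

lemma finsetSum_injective {n : ℕ} {b : Fin n → V}
    (hb : LinearIndependent (ZMod 2) b) :
    Function.Injective (fun S : Finset (Fin n) => ∑ i ∈ S, b i) := by
  classical
  intro S T hST
  simp only [finsetSum_eq_indicator b] at hST
  have h0 : ∑ i, ((if i ∈ S then (1 : ZMod 2) else 0)
      - (if i ∈ T then (1 : ZMod 2) else 0)) • b i = 0 := by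
    simp only [sub_smul, Finset.sum_sub_distrib, hST, sub_self]
  have := Fintype.linearIndependent_iff.mp hb _ h0
  ext i
  have hi := sub_eq_zero.mp (this i)
  by_cases h1 : i ∈ S <;> by_cases h2 : i ∈ T <;> simp_all

end Aux

lemma card_odd_filter (n : ℕ) :
    (Finset.univ.filter (fun S : Finset (Fin (n+1)) => Odd S.card)).card = 2 ^ n := by
  classical
  set f : Finset (Fin (n+1)) → Finset (Fin (n+1)) :=
    fun S => if 0 ∈ S then S.erase 0 else insert 0 S with hf
  have hff : ∀ S, f (f S) = S := by
    intro S
    by_cases h : 0 ∈ S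
    · simp [hf, h, Finset.erase_eq_of_notMem, Finset.insert_erase h]
    · simp [hf, h, Finset.erase_insert h]
  have hcardf : ∀ S, Odd S.card → ¬ Odd ((f S).card) := by
    intro S hS
    by_cases h : 0 ∈ S
    · have h1 : (f S).card = S.card - 1 := by simp [hf, h, Finset.card_erase_of_mem]
      have h2 : 1 ≤ S.card := Finset.card_pos.mpr ⟨0, h⟩
      simp only [Nat.odd_iff] at *
      omega
    · have h1 : (f S).card = S.card + 1 := by simp [hf, h, Finset.card_insert_of_notMem]
      simp only [Nat.odd_iff] at *
      omega
  have hcardf' : ∀ S, ¬ Odd S.card → Odd ((f S).card) := by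
    intro S hS
    by_cases h : 0 ∈ S
    · have h1 : (f S).card = S.card - 1 := by simp [hf, h, Finset.card_erase_of_mem]
      have h2 : 1 ≤ S.card := Finset.card_pos.mpr ⟨0, h⟩
      simp only [Nat.odd_iff] at *
      omega
    · have h1 : (f S).card = S.card + 1 := by simp [hf, h, Finset.card_insert_of_notMem]
      simp only [Nat.odd_iff] at *
      omega
  have key : (Finset.univ.filter (fun S : Finset (Fin (n+1)) => Odd S.card)).card
      = (Finset.univ.filter (fun S : Finset (Fin (n+1)) => ¬ Odd S.card)).card := by
    apply Finset.card_bij' (fun S _ => f S) (fun S _ => f S)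
    · intro S hS
      simp only [Finset.mem_filter, Finset.mem_univ, true_and] at *
      exact hcardf S hS
    · intro S hS
      simp only [Finset.mem_filter, Finset.mem_univ, true_and] at *
      exact hcardf' S hS
    · intro S _; exact hff S
    · intro S _; exact hff S
  have htot := Finset.card_filter_add_card_filter_not
    (s := (Finset.univ : Finset (Finset (Fin (n+1)))))
    (p := fun S => Odd S.card)
  have huniv : (Finset.univ : Finset (Finset (Fin (n+1)))).card = 2 ^ (n+1) := by
    simp [Fintype.card_finset]
  rw [pow_succ] at huniv
  omega

set_option maxHeartbeats 1000000 in
theorem three_fixed_points_structure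
    {V : Type*} [AddCommGroup V] [Module (ZMod 2) V] [FiniteDimensional (ZMod 2) V]
    (k n : ℕ) (hk : Module.finrank (ZMod 2) V = k) (hk2 : 2 ≤ k)
    (hn : 0 < n) (hneven : Even n)
    (B C D : Multiset V)
    (hB0 : ∀ v ∈ B, v ≠ (0 : V)) (hC0 : ∀ v ∈ C, v ≠ (0 : V)) (hD0 : ∀ v ∈ D, v ≠ (0 : V))
    (hcardB : Multiset.card B = n / 2) (hcardC : Multiset.card C = n / 2)
    (hcardD : Multiset.card D = n / 2)
    (hBC : ∀ v, v ∈ B → v ∈ C → False) (hBD : ∀ v, v ∈ B → v ∈ D → False)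
    (hCD : ∀ v, v ∈ C → v ∈ D → False)
    (Ap Aq Ar : Multiset V)
    (hAp : Ap = B + C) (hAq : Aq = B + D) (hAr : Ar = D + C)
    (hspanp : Submodule.span (ZMod 2) {v : V | v ∈ Ap} = ⊤)
    (hspanq : Submodule.span (ZMod 2) {v : V | v ∈ Aq} = ⊤)
    (hspanr : Submodule.span (ZMod 2) {v : V | v ∈ Ar} = ⊤)
    (hP2B : ∀ β ∈ B, CongMod β Ap Aq)
    (hP2C : ∀ γ ∈ C, CongMod γ Ap Ar)
    (hP2D : ∀ δ ∈ D, CongMod δ Aq Ar) :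
    ∃ m : ℕ, 1 ≤ m ∧ ∃ (b : Fin (k - 1) → V) (g : V),
      (LinearIndependent (ZMod 2) (Sum.elim b ![g]) ∧
        Submodule.span (ZMod 2) (Set.range (Sum.elim b ![g])) = ⊤) ∧
      n = m * 2 ^ (k - 1) ∧
      B = m • ((Finset.univ.filter
            (fun S : Finset (Fin (k - 1)) => Odd S.card)).val.map
            (fun S => ∑ i ∈ S, b i)) ∧
      C = B.map (fun x => g + b ⟨0, by omega⟩ + x) ∧
      D = B.map (fun x => g + x) := by
  classical
  obtain ⟨k', rfl⟩ : ∃ k', k = k' + 2 := ⟨k - 2, by omega⟩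
  subst hAp hAq hAr
  -- pick elements
  have hcard_pos : 0 < Multiset.card B := by
    obtain ⟨t, rfl⟩ := hneven
    omega
  obtain ⟨β₀, hβ₀⟩ := Multiset.card_pos_iff_exists_mem.mp hcard_pos
  have hcard_posC : 0 < Multiset.card C := by rw [hcardC, ← hcardB]; exact hcard_pos
  obtain ⟨γ₀, hγ₀⟩ := Multiset.card_pos_iff_exists_mem.mp hcard_posC
  have hcard_posD : 0 < Multiset.card D := by rw [hcardD, ← hcardB]; exact hcard_pos
  obtain ⟨δ₀, hδ₀⟩ := Multiset.card_pos_iff_exists_mem.mp hcard_posD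
  -- translation facts
  have TB : ∀ β ∈ B, ∀ v, Multiset.count v D = Multiset.count (v + β) C := by
    intro β hβ v
    have h := hP2B β hβ
    unfold CongMod at h
    rw [Multiset.map_add, Multiset.map_add] at h
    exact translate_of_congMod (hB0 β hβ) C D hCD (add_left_cancel h) v
  have TC : ∀ γ ∈ C, ∀ v, Multiset.count v D = Multiset.count (v + γ) B := by
    intro γ hγ v
    have h := hP2C γ hγ
    unfold CongMod at h
    rw [Multiset.map_add, Multiset.map_add] at h
    exact translate_of_congMod (hC0 γ hγ) B D hBD (add_right_cancel h) v
  have TD : ∀ δ ∈ D, ∀ v, Multiset.count v C = Multiset.count (v + δ) B := by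
    intro δ hδ v
    have h := hP2D δ hδ
    unfold CongMod at h
    rw [Multiset.map_add, Multiset.map_add] at h
    rw [add_comm (Multiset.map _ D) (Multiset.map _ C)] at h
    exact translate_of_congMod (hD0 δ hδ) B C hBC (add_right_cancel h) v
  set p : V := γ₀ + δ₀ with hp
  set G : Set V := {x | ∃ β ∈ B, x = β + p} ∪ ({x | ∃ γ ∈ C, x = γ + γ₀}
    ∪ {x | ∃ δ ∈ D, x = δ + δ₀}) with hG
  set E : Submodule (ZMod 2) V := Submodule.span (ZMod 2) G with hE
  -- invariance of counts of B under G
  have hInvB : ∀ w ∈ G, ∀ v, Multiset.count (v + w) B = Multiset.count v B := by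
    rintro w (⟨β, hβ, rfl⟩ | ⟨γ, hγ, rfl⟩ | ⟨δ, hδ, rfl⟩) v
    · have e1 : v + (β + p) = (v + γ₀ + β) + δ₀ := by rw [hp]; abel
      rw [e1, ← TD δ₀ hδ₀ (v + γ₀ + β), ← TB β hβ (v + γ₀), TC γ₀ hγ₀ (v + γ₀),
        add_cancel_right]
    · have e1 : v + (γ + γ₀) = (v + γ₀) + γ := by abel
      rw [e1, ← TC γ hγ (v + γ₀), TC γ₀ hγ₀ (v + γ₀), add_cancel_right]
    · have e1 : v + (δ + δ₀) = (v + δ₀) + δ := by abel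
      rw [e1, ← TD δ hδ (v + δ₀), TD δ₀ hδ₀ (v + δ₀), add_cancel_right]
  have hEInv : ∀ w ∈ E, ∀ v, Multiset.count (v + w) B = Multiset.count v B :=
    count_invariant_span hInvB
  have hgen1 : ∀ β ∈ B, β + p ∈ E := fun β hβ =>
    Submodule.subset_span (Or.inl ⟨β, hβ, rfl⟩)
  have hgen2 : ∀ γ ∈ C, γ + γ₀ ∈ E := fun γ hγ =>
    Submodule.subset_span (Or.inr (Or.inl ⟨γ, hγ, rfl⟩))
  have hgen3 : ∀ δ ∈ D, δ + δ₀ ∈ E := fun δ hδ =>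
    Submodule.subset_span (Or.inr (Or.inr ⟨δ, hδ, rfl⟩))
  set m : ℕ := Multiset.count β₀ B with hm
  have hm1 : 1 ≤ m := Multiset.count_pos.mpr hβ₀
  -- count characterizations
  have cB : ∀ v, Multiset.count v B = if v + p ∈ E then m else 0 := by
    intro v
    split_ifs with hvp
    · have hw : β₀ + v ∈ E := by
        have h2 := E.add_mem (hgen1 β₀ hβ₀) hvp
        have e : (β₀ + p) + (v + p) = β₀ + v + (p + p) := by abel
        rwa [e, char2_add_self, add_zero] at h2
      have h3 := hEInv (β₀ + v) hw β₀
      have e : β₀ + (β₀ + v) = v := by rw [← add_assoc, char2_add_self, zero_add]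
      rwa [e] at h3
    · by_contra hne
      have hvB : v ∈ B := by
        rcases Nat.eq_zero_or_pos (Multiset.count v B) with h | h
        · exact absurd h hne
        · exact Multiset.count_pos.mp h
      exact hvp (hgen1 v hvB)
  have cC : ∀ v, Multiset.count v C = if v + γ₀ ∈ E then m else 0 := by
    intro v
    rw [TD δ₀ hδ₀ v, cB (v + δ₀)]
    have e : v + δ₀ + p = v + γ₀ + (δ₀ + δ₀) := by rw [hp]; abel
    rw [e, char2_add_self, add_zero]
  have cD : ∀ v, Multiset.count v D = if v + δ₀ ∈ E then m else 0 := by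
    intro v
    rw [TB β₀ hβ₀ v, cC (v + β₀)]
    have e1 : (v + δ₀) + (β₀ + p) = v + β₀ + γ₀ + (δ₀ + δ₀) := by rw [hp]; abel
    have e2 : (v + δ₀) + (β₀ + p) = v + β₀ + γ₀ := by
      rw [e1, char2_add_self, add_zero]
    rw [← e2, mem_coset_iff (hgen1 β₀ hβ₀)]
  -- nonmembership facts
  have hγ₀E : γ₀ ∉ E := by
    intro h
    have h0 : Multiset.count (0 : V) C = m := by
      rw [cC 0, if_pos]; rwa [zero_add]
    exact hC0 0 (Multiset.count_pos.mp (by omega)) rfl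
  have hpE : p ∉ E := by
    intro h
    have h0 : Multiset.count (0 : V) B = m := by
      rw [cB 0, if_pos]; rwa [zero_add]
    exact hB0 0 (Multiset.count_pos.mp (by omega)) rfl
  have hδ₀E : δ₀ ∉ E := by
    intro h
    have e : γ₀ + p = δ₀ := by rw [hp, ← add_assoc, char2_add_self, zero_add]
    have h0 : Multiset.count γ₀ B = m := by
      rw [cB γ₀, if_pos]; rwa [e]
    exact hBC γ₀ (Multiset.count_pos.mp (by omega)) hγ₀
  -- spanning
  have hF : E ⊔ Submodule.span (ZMod 2) {p, δ₀} = ⊤ := by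
    rw [eq_top_iff, ← hspanq]
    apply Submodule.span_le.mpr
    intro v hv
    rw [Set.mem_setOf_eq, Multiset.mem_add] at hv
    rcases hv with hv | hv
    · have h1 : v + p ∈ E ⊔ Submodule.span (ZMod 2) {p, δ₀} :=
        Submodule.mem_sup_left (hgen1 v hv)
      have h2 : p ∈ E ⊔ Submodule.span (ZMod 2) {p, δ₀} :=
        Submodule.mem_sup_right (Submodule.subset_span (Or.inl rfl))
      have h3 := Submodule.add_mem _ h1 h2
      rwa [add_cancel_right] at h3
    · have h1 : v + δ₀ ∈ E ⊔ Submodule.span (ZMod 2) {p, δ₀} :=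
        Submodule.mem_sup_left (hgen3 v hv)
      have h2 : δ₀ ∈ E ⊔ Submodule.span (ZMod 2) {p, δ₀} :=
        Submodule.mem_sup_right (Submodule.subset_span (Or.inr rfl))
      have h3 := Submodule.add_mem _ h1 h2
      rwa [add_cancel_right] at h3
  -- dimension of E
  have hrup : Module.finrank (ZMod 2) E + 2 ≤ k' + 2 := by
    have h1 : E < E ⊔ Submodule.span (ZMod 2) {p} :=
      SetLike.lt_iff_le_and_exists.mpr ⟨le_sup_left, p,
        Submodule.mem_sup_right (Submodule.subset_span rfl), hpE⟩
    have hδnot : δ₀ ∉ E ⊔ Submodule.span (ZMod 2) {p} := by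
      intro h
      rcases Submodule.mem_sup.mp h with ⟨e, he, z, hz, hez⟩
      rcases Submodule.mem_span_singleton.mp hz with ⟨a, rfl⟩
      have hcases : a = 0 ∨ a = 1 := by fin_cases a; exacts [Or.inl rfl, Or.inr rfl]
      rcases hcases with rfl | rfl
      · rw [zero_smul, add_zero] at hez
        exact hδ₀E (hez ▸ he)
      · rw [one_smul] at hez
        have e2 : e = δ₀ + p := by
          rw [← hez, add_assoc, char2_add_self, add_zero]
        have e3 : δ₀ + p = γ₀ := by
          rw [hp]
          have e4 : δ₀ + (γ₀ + δ₀) = γ₀ + (δ₀ + δ₀) := by abel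
          rw [e4, char2_add_self, add_zero]
        rw [e2, e3] at he
        exact hγ₀E he
    have h2 : E ⊔ Submodule.span (ZMod 2) {p} < ⊤ :=
      SetLike.lt_iff_le_and_exists.mpr ⟨le_top, δ₀, Submodule.mem_top, hδnot⟩
    have f1 := Submodule.finrank_lt_finrank_of_lt h1
    have f2 := Submodule.finrank_lt_finrank_of_lt h2
    have f3 : Module.finrank (ZMod 2) (⊤ : Submodule (ZMod 2) V) = k' + 2 := by
      rw [finrank_top]; exact hk
    omega
  have hrlo : k' + 2 ≤ Module.finrank (ZMod 2) E + 2 := by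
    have h1 := Submodule.finrank_sup_add_finrank_inf_eq E
      (Submodule.span (ZMod 2) {p, δ₀})
    have h2 : Module.finrank (ZMod 2)
        (Submodule.span (ZMod 2) ({p, δ₀} : Set V)) ≤ 2 := by
      refine (finrank_span_le_card _).trans ?_
      rw [Set.toFinset_insert, Set.toFinset_singleton]
      exact (Finset.card_insert_le _ _).trans (by simp)
    have h3 : Module.finrank (ZMod 2)
        ↥(E ⊔ Submodule.span (ZMod 2) ({p, δ₀} : Set V)) = k' + 2 := by
      rw [hF, finrank_top]; exact hk
    omega
  have hrE : Module.finrank (ZMod 2) E = k' := by omega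
  -- basis of E
  let ee : Module.Basis (Fin k') (ZMod 2) E := Module.finBasisOfFinrankEq (ZMod 2) E hrE
  let e : Fin k' → V := fun j => (ee j : V)
  have heE : ∀ j, e j ∈ E := fun j => (ee j).2
  let b : Fin (k' + 1) → V := Fin.cons p (fun j => p + e j)
  have hb0 : b 0 = p := rfl
  have hbs : ∀ j : Fin k', b j.succ = p + e j := fun j => by
    simp only [b, Fin.cons_succ]
  have hEspan : Submodule.span (ZMod 2) (Set.range e) = E := by
    have h1 := ee.span_eq
    have h2 : Set.range e = E.subtype '' Set.range ee := by
      rw [← Set.range_comp]; rfl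
    rw [h2, ← Submodule.map_span, h1, Submodule.map_top, Submodule.range_subtype]
  set W : Submodule (ZMod 2) V :=
    Submodule.span (ZMod 2) (Set.range (Sum.elim b ![γ₀])) with hW
  have hpW : p ∈ W := Submodule.subset_span ⟨Sum.inl 0, rfl⟩
  have hγW : γ₀ ∈ W := Submodule.subset_span ⟨Sum.inr 0, rfl⟩
  have heW : ∀ j, e j ∈ W := by
    intro j
    have h1 : b j.succ ∈ W := Submodule.subset_span ⟨Sum.inl j.succ, rfl⟩
    have h2 := W.add_mem hpW h1
    rw [hbs j, ← add_assoc, char2_add_self, zero_add] at h2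
    exact h2
  have hEW : E ≤ W := by
    rw [← hEspan]
    apply Submodule.span_le.mpr
    rintro x ⟨j, rfl⟩
    exact heW j
  have hδW : δ₀ ∈ W := by
    have h1 := W.add_mem hpW hγW
    have e1 : p + γ₀ = δ₀ + (γ₀ + γ₀) := by rw [hp]; abel
    rwa [e1, char2_add_self, add_zero] at h1
  have hWtop : W = ⊤ := by
    rw [eq_top_iff, ← hF]
    apply sup_le hEW
    apply Submodule.span_le.mpr
    rintro x (rfl | rfl)
    · exact hpW
    · exact hδW
  have hli : LinearIndependent (ZMod 2) (Sum.elim b ![γ₀]) := by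
    apply linearIndependent_of_top_le_span_of_card_eq_finrank
    · rw [← hW, hWtop]
    · simp [hk]
  have hlib : LinearIndependent (ZMod 2) b := by
    have h1 := hli.comp Sum.inl Sum.inl_injective
    rwa [Sum.elim_comp_inl] at h1
  -- membership of b-sums in the coset p + E
  have hbmemE : ∀ i : Fin (k' + 1), b i + p ∈ E := by
    intro i
    refine Fin.cases ?_ ?_ i
    · rw [hb0, char2_add_self]; exact E.zero_mem
    · intro j
      rw [hbs j]
      have e1 : p + e j + p = e j + (p + p) := by abel
      rw [e1, char2_add_self, add_zero]
      exact heE j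
  have hsum_mem : ∀ S : Finset (Fin (k' + 1)), Odd S.card →
      (∑ i ∈ S, b i) + p ∈ E := by
    intro S hS
    have h1 : ∑ i ∈ S, (b i + p) = (∑ i ∈ S, b i) + p := by
      rw [Finset.sum_add_distrib, Finset.sum_const, odd_nsmul_char2 hS]
    exact h1 ▸ Submodule.sum_mem E (fun i _ => hbmemE i)
  have hsum_surj : ∀ v, v + p ∈ E →
      ∃ S : Finset (Fin (k' + 1)), Odd S.card ∧ ∑ i ∈ S, b i = v := by
    intro v hv
    set w : E := ⟨v + p, hv⟩ with hw
    set T : Finset (Fin k') := Finset.univ.filter (fun j => ee.repr w j = 1) with hT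
    have hTsum : ∑ j ∈ T, e j = v + p := by
      have h1 := ee.sum_repr w
      have h2 : ((∑ j, ee.repr w j • ee j : E) : V) = v + p := by rw [h1]
      rw [Submodule.coe_sum] at h2
      have h3 : ∀ j, ((ee.repr w j • ee j : E) : V) = ee.repr w j • e j := fun j => rfl
      simp only [h3] at h2
      rw [finsetSum_eq_indicator e T]
      rw [← h2]
      apply Finset.sum_congr rfl
      intro j _
      congr 1
      by_cases hj : ee.repr w j = 1
      · rw [if_pos, hj]
        rw [hT]; simp [hj]
      · have h0 : ee.repr w j = 0 := by
          have : ee.repr w j = 0 ∨ ee.repr w j = 1 := by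
            generalize ee.repr w j = a; fin_cases a; exacts [Or.inl rfl, Or.inr rfl]
          tauto
        rw [if_neg, h0]
        rw [hT]; simp [hj]
    set T' : Finset (Fin (k' + 1)) := T.image Fin.succ with hT'
    have h0T' : (0 : Fin (k' + 1)) ∉ T' := by
      intro hmem
      rw [hT'] at hmem
      obtain ⟨j, _, hj⟩ := Finset.mem_image.mp hmem
      exact Fin.succ_ne_zero j hj
    have hcardT' : T'.card = T.card :=
      Finset.card_image_of_injective _ (Fin.succ_injective _)
    have hsumT' : ∑ i ∈ T', b i = T.card • p + (v + p) := by
      rw [hT', Finset.sum_image (fun x _ y _ h => Fin.succ_injective _ h)]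
      have h1 : ∀ j ∈ T, b j.succ = p + e j := fun j _ => hbs j
      rw [Finset.sum_congr rfl h1, Finset.sum_add_distrib, Finset.sum_const, hTsum]
    by_cases hpar : Odd T.card
    · refine ⟨T', by rwa [hcardT'], ?_⟩
      rw [hsumT', odd_nsmul_char2 hpar]
      have e1 : p + (v + p) = v + (p + p) := by abel
      rw [e1, char2_add_self, add_zero]
    · refine ⟨insert 0 T', ?_, ?_⟩
      · rw [Finset.card_insert_of_notMem h0T', hcardT']
        rw [Nat.odd_iff] at hpar ⊢
        omega
      · rw [Finset.sum_insert h0T', hsumT', hb0,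
          even_nsmul_char2 (Nat.not_odd_iff_even.mp hpar), zero_add]
        have e1 : p + (v + p) = v + (p + p) := by abel
        rw [e1, char2_add_self, add_zero]
  -- final assembly
  set T₀ : Finset (Finset (Fin (k' + 1))) :=
    Finset.univ.filter (fun S : Finset (Fin (k' + 1)) => Odd S.card) with hT₀
  have hBeq : B = m • (T₀.val.map (fun S => ∑ i ∈ S, b i)) := by
    apply Multiset.ext.mpr
    intro v
    have hcount : Multiset.count v (T₀.val.map (fun S => ∑ i ∈ S, b i))
        = (T₀.filter (fun S => v = ∑ i ∈ S, b i)).card := by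
      rw [Multiset.count_map, ← Finset.filter_val]
      rfl
    rw [Multiset.count_nsmul, hcount, cB v]
    split_ifs with hvp
    · obtain ⟨S₀, hS₀odd, hS₀sum⟩ := hsum_surj v hvp
      have hfilter : T₀.filter (fun S => v = ∑ i ∈ S, b i) = {S₀} := by
        apply Finset.eq_singleton_iff_unique_mem.mpr
        constructor
        · rw [Finset.mem_filter, hT₀, Finset.mem_filter]
          exact ⟨⟨Finset.mem_univ _, hS₀odd⟩, hS₀sum.symm⟩
        · intro S hS
          rw [Finset.mem_filter] at hS
          refine finsetSum_injective hlib ?_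
          show ∑ i ∈ S, b i = ∑ i ∈ S₀, b i
          rw [← hS.2, hS₀sum]
      rw [hfilter, Finset.card_singleton, mul_one]
    · have hfilter : T₀.filter (fun S => v = ∑ i ∈ S, b i) = ∅ := by
        apply Finset.filter_eq_empty_iff.mpr
        intro S hS h
        rw [hT₀, Finset.mem_filter] at hS
        exact hvp (h ▸ hsum_mem S hS.2)
      rw [hfilter, Finset.card_empty, mul_zero]
  have hneq : n = m * 2 ^ (k' + 1) := by
    have hcards := congrArg Multiset.card hBeq
    rw [hcardB, Multiset.card_nsmul, Multiset.card_map] at hcards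
    have hval : Multiset.card T₀.val = T₀.card := rfl
    rw [hval, hT₀, card_odd_filter k'] at hcards
    obtain ⟨t, ht⟩ := hneven
    rw [pow_succ]
    have h2 : n = 2 * (m * 2 ^ k') := by omega
    rw [h2]
    ring
  have hbz : ∀ h : 0 < k' + 1, b ⟨0, h⟩ = p := fun h => rfl
  have hγp : γ₀ + p = δ₀ := by
    have e1 : γ₀ + p = δ₀ + (γ₀ + γ₀) := by rw [hp]; abel
    rw [e1, char2_add_self, add_zero]
  have hCeq : C = B.map (fun x => δ₀ + x) := by
    apply Multiset.ext.mpr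
    intro v
    have hR : Multiset.count v (B.map (fun x => δ₀ + x))
        = Multiset.count (δ₀ + v) B := by
      have h1 := Multiset.count_map_eq_count' (fun x : V => δ₀ + x) B
        (add_right_injective δ₀) (δ₀ + v)
      have e1 : δ₀ + (δ₀ + v) = v := by rw [← add_assoc, char2_add_self, zero_add]
      rwa [e1] at h1
    rw [hR, cC v, cB (δ₀ + v)]
    have e2 : δ₀ + v + p = v + γ₀ := by
      have e3 : δ₀ + v + p = v + γ₀ + (δ₀ + δ₀) := by rw [hp]; abel
      rw [e3, char2_add_self, add_zero]
    rw [e2]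
  have hDeq : D = B.map (fun x => γ₀ + x) := by
    apply Multiset.ext.mpr
    intro v
    have hR : Multiset.count v (B.map (fun x => γ₀ + x))
        = Multiset.count (γ₀ + v) B := by
      have h1 := Multiset.count_map_eq_count' (fun x : V => γ₀ + x) B
        (add_right_injective γ₀) (γ₀ + v)
      have e1 : γ₀ + (γ₀ + v) = v := by rw [← add_assoc, char2_add_self, zero_add]
      rwa [e1] at h1
    rw [hR, cD v, cB (γ₀ + v)]
    have e2 : γ₀ + v + p = v + δ₀ := by
      have e3 : γ₀ + v + p = v + δ₀ + (γ₀ + γ₀) := by rw [hp]; abel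
      rw [e3, char2_add_self, add_zero]
    rw [e2]
  refine ⟨m, hm1, b, γ₀, ⟨hli, by rw [← hW, hWtop]⟩, hneq, hBeq, ?_, ?_⟩
  · rw [hCeq]
    congr 1
    funext x
    rw [hbz, hγp]
  · exact hDeq
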